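/- arXiv:1603.05321 — 2 statements merged into one kernel-verified Lean document; each statement's English description precedes it below -/
import Mathlib

section
/- Let Φ = (φ_n) be a frame for a separable Hilbert space H and m = (m_n) a sequence of nonzero scalars. If G = (g_n) is a sequence in H such that for every dual frame Φ^d of Φ the multiplier M_{m,Φ^d,G}, given by f ↦ Σ_n m_n ⟨f,g_n⟩ φ_n^d, is well-defined on H and equals the zero operator, then g_n = 0 for all n. -/
open scoped ComplexConjugate ComplexInnerProductSpace

variable {H : Type*} [NormedAddCommGroup H] [InnerProductSpace ℂ H] [CompleteSpace H]

/-- `Φ` is a Bessel sequence in `H`. -/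
def IsBessel (Φ : ℕ → H) : Prop :=
  ∃ B : ℝ, 0 < B ∧ ∀ f : H, Summable (fun n => ‖⟪Φ n, f⟫‖ ^ 2) ∧
    ∑' n, ‖⟪Φ n, f⟫‖ ^ 2 ≤ B * ‖f‖ ^ 2

/-- `Φ` is a frame for `H`. -/
def IsFrame (Φ : ℕ → H) : Prop :=
  ∃ A B : ℝ, 0 < A ∧ 0 < B ∧ ∀ f : H, Summable (fun n => ‖⟪Φ n, f⟫‖ ^ 2) ∧
    A * ‖f‖ ^ 2 ≤ ∑' n, ‖⟪Φ n, f⟫‖ ^ 2 ∧ ∑' n, ‖⟪Φ n, f⟫‖ ^ 2 ≤ B * ‖f‖ ^ 2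

/-- `F` is a dual frame of the frame `Φ`:
`f = Σ ⟨f, Φ n⟩ F n = Σ ⟨f, F n⟩ Φ n` for all `f` (paper convention `⟨f, x⟩ = ⟪x, f⟫`). -/
def IsDualFrame (Φ F : ℕ → H) : Prop :=
  IsFrame F ∧ ∀ f : H, HasSum (fun n => ⟪Φ n, f⟫ • F n) f ∧ HasSum (fun n => ⟪F n, f⟫ • Φ n) f

/-- `F` is an analysis pseudo-dual of `Φ`: `f = Σ ⟨f, F n⟩ Φ n` for all `f`. -/
def IsAPseudoDual (Φ F : ℕ → H) : Prop := ∀ f : H, HasSum (fun n => ⟪F n, f⟫ • Φ n) f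

/-- `F` is a synthesis pseudo-dual of `Φ`: `f = Σ ⟨f, Φ n⟩ F n` for all `f`. -/
def IsSPseudoDual (Φ F : ℕ → H) : Prop := ∀ f : H, HasSum (fun n => ⟪Φ n, f⟫ • F n) f

/-- The frame operator `S_Φ f = Σ ⟨f, Φ n⟩ Φ n`. -/
noncomputable def frameOp (Φ : ℕ → H) (f : H) : H := ∑' n, ⟪Φ n, f⟫ • Φ n

/-- `m` is semi-normalized: `0 < a ≤ ‖m n‖ ≤ b < ∞`. -/
def SemiNormalized (m : ℕ → ℂ) : Prop := ∃ a b : ℝ, 0 < a ∧ ∀ n, a ≤ ‖m n‖ ∧ ‖m n‖ ≤ b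

/-! The canonical dual `S⁻¹ Φ` is a dual frame (the frame operator `S` is invertible since
`A ≤ S`), and so is every perturbation `n ↦ Φd n + c n • w` of a dual frame `Φd` by a
square-summable `c` with `∑ conj (c n) • Φ n = 0`. Subtracting the hypothesis for `Φd` from
the one for its perturbation gives `∑ a n * c n = 0` for all such `c`, where
`a n = m n * ⟪G n, f⟫`. For `c n = δ n k - ⟪Φ k, S⁻¹ Φ n⟫`, adding the hypothesis for the
canonical dual paired with `Φ k` leaves `a k = 0`; at `f = G k` this is `m k * ‖G k‖² = 0`. -/

theorem HasSum.const_inner {E : Type*} [SeminormedAddCommGroup E] [InnerProductSpace ℂ E]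
    {a : ℕ → E} {s : E} (h : HasSum a s) (g : E) : HasSum (fun n => ⟪g, a n⟫) ⟪g, s⟫ :=
  h.mapL (innerSL ℂ g)

theorem HasSum.inner_const {E : Type*} [SeminormedAddCommGroup E] [InnerProductSpace ℂ E]
    {a : ℕ → E} {s : E} (h : HasSum a s) (g : E) : HasSum (fun n => ⟪a n, g⟫) ⟪s, g⟫ :=
  h.mapL (innerSLFlip ℂ g)

theorem norm_add_sq_le_two_mul {E : Type*} [SeminormedAddCommGroup E] (a b : E) :
    ‖a + b‖ ^ 2 ≤ 2 * (‖a‖ ^ 2 + ‖b‖ ^ 2) :=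
  (pow_le_pow_left₀ (norm_nonneg _) (norm_add_le a b) 2).trans add_sq_le

theorem Summable.norm_sub_sq {E : Type*} [SeminormedAddCommGroup E] {a b : ℕ → E}
    (ha : Summable fun n => ‖a n‖ ^ 2) (hb : Summable fun n => ‖b n‖ ^ 2) :
    Summable fun n => ‖a n - b n‖ ^ 2 :=
  .of_nonneg_of_le (fun _ => by positivity)
    (fun n => by simpa only [sub_eq_add_neg, norm_neg] using norm_add_sq_le_two_mul (a n) (-b n))
    ((ha.add hb).mul_left 2)

open scoped InnerProduct

section Frames

variable {E : Type*} [NormedAddCommGroup E] [InnerProductSpace ℂ E]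

def BesselBound (Φ : ℕ → E) (B : ℝ) : Prop :=
  ∀ f : E, Summable (fun n => ‖⟪Φ n, f⟫‖ ^ 2) ∧ ∑' n, ‖⟪Φ n, f⟫‖ ^ 2 ≤ B * ‖f‖ ^ 2

namespace BesselBound

variable {Φ : ℕ → E} {B : ℝ}

theorem norm_sum_smul_sq_le (hΦ : BesselBound Φ B) (hB : 0 ≤ B) (c : ℕ → ℂ) (s : Finset ℕ) :
    ‖∑ n ∈ s, c n • Φ n‖ ^ 2 ≤ B * ∑ n ∈ s, ‖c n‖ ^ 2 := by
  set g := ∑ n ∈ s, c n • Φ n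
  have hcoef : ∑ n ∈ s, ‖⟪Φ n, g⟫‖ ^ 2 ≤ B * ‖g‖ ^ 2 :=
    ((hΦ g).1.sum_le_tsum s fun n _ => by positivity).trans (hΦ g).2
  have hself : ‖g‖ ^ 2 ≤ ∑ n ∈ s, ‖c n‖ * ‖⟪Φ n, g⟫‖ := calc
    ‖g‖ ^ 2 = ‖⟪g, g⟫‖ := by simp [inner_self_eq_norm_sq_to_K]
    _ = ‖∑ n ∈ s, c n * ⟪g, Φ n⟫‖ := by simp only [g, inner_sum, inner_smul_right]
    _ ≤ ∑ n ∈ s, ‖c n‖ * ‖⟪Φ n, g⟫‖ := by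
      refine (norm_sum_le _ _).trans_eq (Finset.sum_congr rfl fun n _ => ?_)
      rw [norm_mul, norm_inner_symm]
  have hc0 : 0 ≤ ∑ n ∈ s, ‖c n‖ ^ 2 := by positivity
  have hquartic : (‖g‖ ^ 2) ^ 2 ≤ (B * ∑ n ∈ s, ‖c n‖ ^ 2) * ‖g‖ ^ 2 := calc
    (‖g‖ ^ 2) ^ 2 ≤ (∑ n ∈ s, ‖c n‖ * ‖⟪Φ n, g⟫‖) ^ 2 := by gcongr
    _ ≤ (∑ n ∈ s, ‖c n‖ ^ 2) * ∑ n ∈ s, ‖⟪Φ n, g⟫‖ ^ 2 := Finset.sum_mul_sq_le_sq_mul_sq _ _ _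
    _ ≤ (∑ n ∈ s, ‖c n‖ ^ 2) * (B * ‖g‖ ^ 2) := by gcongr
    _ = (B * ∑ n ∈ s, ‖c n‖ ^ 2) * ‖g‖ ^ 2 := by ring
  nlinarith [mul_nonneg hB hc0, sq_nonneg ‖g‖]

theorem norm_sq_le_of_hasSum (hΦ : BesselBound Φ B) (hB : 0 ≤ B) {c : ℕ → ℂ}
    (hc : Summable fun n => ‖c n‖ ^ 2) {g : E} (hg : HasSum (fun n => c n • Φ n) g) :
    ‖g‖ ^ 2 ≤ B * ∑' n, ‖c n‖ ^ 2 :=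
  le_of_tendsto (((continuous_norm.tendsto g).comp hg).pow 2) <| .of_forall fun s =>
    (hΦ.norm_sum_smul_sq_le hB c s).trans <| by
      gcongr; exact hc.sum_le_tsum s fun n _ => by positivity

theorem summable_smul [CompleteSpace E] (hΦ : BesselBound Φ B) (hB : 0 ≤ B) {c : ℕ → ℂ}
    (hc : Summable fun n => ‖c n‖ ^ 2) : Summable fun n => c n • Φ n := by
  rw [summable_iff_vanishing_norm]
  intro ε hε
  obtain ⟨s, hs⟩ := summable_iff_vanishing_norm.1 hc (ε ^ 2 / (B + 1)) (by positivity)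
  refine ⟨s, fun t ht => (pow_lt_pow_iff_left₀ (norm_nonneg _) hε.le two_ne_zero).1 ?_⟩
  have htail : ∑ n ∈ t, ‖c n‖ ^ 2 < ε ^ 2 / (B + 1) := (le_abs_self _).trans_lt (hs t ht)
  calc ‖∑ n ∈ t, c n • Φ n‖ ^ 2 ≤ B * ∑ n ∈ t, ‖c n‖ ^ 2 := hΦ.norm_sum_smul_sq_le hB c t
    _ ≤ (B + 1) * ∑ n ∈ t, ‖c n‖ ^ 2 := by gcongr; linarith
    _ < (B + 1) * (ε ^ 2 / (B + 1)) := by gcongr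
    _ = ε ^ 2 := by field_simp

end BesselBound

theorem IsFrame.isBessel {Φ : ℕ → E} (hΦ : IsFrame Φ) : IsBessel Φ :=
  let ⟨_, B, _, hB, hΦAB⟩ := hΦ
  ⟨B, hB, fun f => ⟨(hΦAB f).1, (hΦAB f).2.2⟩⟩

namespace IsBessel

variable {Φ Ψ F : ℕ → E}

theorem add (hΦ : IsBessel Φ) (hΨ : IsBessel Ψ) : IsBessel fun n => Φ n + Ψ n := by
  obtain ⟨B, hB, hΦB⟩ := hΦ
  obtain ⟨B', hB', hΨB⟩ := hΨ
  refine ⟨2 * (B + B'), by positivity, fun f => ?_⟩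
  have hle : ∀ n, ‖⟪Φ n + Ψ n, f⟫‖ ^ 2 ≤ 2 * (‖⟪Φ n, f⟫‖ ^ 2 + ‖⟪Ψ n, f⟫‖ ^ 2) := fun n => by
    rw [inner_add_left]; exact norm_add_sq_le_two_mul _ _
  have hsum := ((hΦB f).1.add (hΨB f).1).mul_left 2
  have hsum' : Summable fun n => ‖⟪Φ n + Ψ n, f⟫‖ ^ 2 :=
    .of_nonneg_of_le (fun _ => by positivity) hle hsum
  refine ⟨hsum', ?_⟩
  calc ∑' n, ‖⟪Φ n + Ψ n, f⟫‖ ^ 2 ≤ ∑' n, 2 * (‖⟪Φ n, f⟫‖ ^ 2 + ‖⟪Ψ n, f⟫‖ ^ 2) :=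
        hsum'.tsum_le_tsum hle hsum
    _ = 2 * (∑' n, ‖⟪Φ n, f⟫‖ ^ 2 + ∑' n, ‖⟪Ψ n, f⟫‖ ^ 2) := by
        rw [tsum_mul_left, (hΦB f).1.tsum_add (hΨB f).1]
    _ ≤ 2 * (B * ‖f‖ ^ 2 + B' * ‖f‖ ^ 2) := by gcongr; exacts [(hΦB f).2, (hΨB f).2]
    _ = 2 * (B + B') * ‖f‖ ^ 2 := by ring

theorem smul_const {c : ℕ → ℂ} (hc : Summable fun n => ‖c n‖ ^ 2) (w : E) :
    IsBessel fun n => c n • w := by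
  refine ⟨(∑' n, ‖c n‖ ^ 2) * ‖w‖ ^ 2 + 1, by positivity, fun f => ?_⟩
  have hterm : ∀ n, ‖⟪c n • w, f⟫‖ ^ 2 = ‖c n‖ ^ 2 * ‖⟪w, f⟫‖ ^ 2 := fun n => by
    rw [inner_smul_left, norm_mul, RCLike.norm_conj, mul_pow]
  simp only [hterm]
  refine ⟨hc.mul_right _, ?_⟩
  rw [tsum_mul_right]
  calc (∑' n, ‖c n‖ ^ 2) * ‖⟪w, f⟫‖ ^ 2 ≤ (∑' n, ‖c n‖ ^ 2) * (‖w‖ * ‖f‖) ^ 2 := by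
        gcongr; exact norm_inner_le_norm w f
    _ = (∑' n, ‖c n‖ ^ 2) * ‖w‖ ^ 2 * ‖f‖ ^ 2 := by ring
    _ ≤ ((∑' n, ‖c n‖ ^ 2) * ‖w‖ ^ 2 + 1) * ‖f‖ ^ 2 := by gcongr; linarith

theorem isFrame_of_hasSum (hΦ : IsBessel Φ) (hF : IsBessel F)
    (hrec : ∀ f, HasSum (fun n => ⟪F n, f⟫ • Φ n) f) : IsFrame F := by
  obtain ⟨B, hB, hΦB⟩ := hΦ
  obtain ⟨B', hB', hFB⟩ := hF
  refine ⟨B⁻¹, B', inv_pos.2 hB, hB', fun f => ⟨(hFB f).1, ?_, (hFB f).2⟩⟩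
  rw [inv_mul_le_iff₀ hB]
  exact BesselBound.norm_sq_le_of_hasSum hΦB hB.le (hFB f).1 (hrec f)

theorem isDualFrame_of_hasSum (hΦ : IsBessel Φ) (hF : IsBessel F)
    (hΦF : ∀ f, HasSum (fun n => ⟪Φ n, f⟫ • F n) f)
    (hFΦ : ∀ f, HasSum (fun n => ⟪F n, f⟫ • Φ n) f) : IsDualFrame Φ F :=
  ⟨hΦ.isFrame_of_hasSum hF hFΦ, fun f => ⟨hΦF f, hFΦ f⟩⟩

end IsBessel

theorem IsDualFrame.add_smul_const {Φ F : ℕ → E} (hΦ : IsBessel Φ) (hF : IsDualFrame Φ F)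
    {c : ℕ → ℂ} (hc : Summable fun n => ‖c n‖ ^ 2) (hcΦ : HasSum (fun n => conj (c n) • Φ n) 0)
    (w : E) : IsDualFrame Φ fun n => F n + c n • w := by
  have hcoef : ∀ f, HasSum (fun n => ⟪Φ n, f⟫ * c n) 0 := fun f => by
    simpa [inner_smul_left, mul_comm] using hcΦ.inner_const f
  refine hΦ.isDualFrame_of_hasSum (hF.1.isBessel.add (.smul_const hc w)) (fun f => ?_) (fun f => ?_)
  · simpa only [smul_add, smul_smul, zero_smul, add_zero] using
      (hF.2 f).1.add ((hcoef f).smul_const w)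
  · simpa only [inner_add_left, inner_smul_left, add_smul, smul_smul, mul_comm, smul_zero, add_zero]
      using (hF.2 f).2.add (hcΦ.const_smul ⟪w, f⟫)

theorem IsDualFrame.hasSum_mul_eq_zero_of_forall [Nontrivial E] {Φ F : ℕ → E} (hΦ : IsBessel Φ)
    (hF : IsDualFrame Φ F) {a : ℕ → ℂ}
    (ha : ∀ Φd, IsDualFrame Φ Φd → HasSum (fun n => a n • Φd n) 0)
    {c : ℕ → ℂ} (hc : Summable fun n => ‖c n‖ ^ 2) (hcΦ : HasSum (fun n => conj (c n) • Φ n) 0) :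
    HasSum (fun n => a n * c n) 0 := by
  obtain ⟨w, hw⟩ := exists_ne (0 : E)
  have h := ((ha _ (hF.add_smul_const hΦ hc hcΦ w)).sub (ha F hF)).const_inner w
  simp only [smul_add, add_sub_cancel_left, smul_smul, inner_smul_right, sub_zero,
    inner_zero_right] at h
  rwa [← zero_mul ⟪w, w⟫, hasSum_mul_right_iff (inner_self_ne_zero.2 hw)] at h

namespace IsBessel

variable {Φ : ℕ → E} [CompleteSpace E]

theorem hasSum_frameOp (hΦ : IsBessel Φ) (f : E) :
    HasSum (fun n => ⟪Φ n, f⟫ • Φ n) (frameOp Φ f) := by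
  obtain ⟨B, hB, hΦB⟩ := hΦ
  exact (BesselBound.summable_smul hΦB hB.le (hΦB f).1).hasSum

theorem hasSum_inner_frameOp_left (hΦ : IsBessel Φ) (f g : E) :
    HasSum (fun n => ⟪f, Φ n⟫ * ⟪Φ n, g⟫) ⟪frameOp Φ f, g⟫ := by
  simpa only [inner_smul_left, inner_conj_symm] using (hΦ.hasSum_frameOp f).inner_const g

theorem hasSum_inner_frameOp_right (hΦ : IsBessel Φ) (f g : E) :
    HasSum (fun n => ⟪f, Φ n⟫ * ⟪Φ n, g⟫) ⟪f, frameOp Φ g⟫ := by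
  simpa only [inner_smul_right, mul_comm] using (hΦ.hasSum_frameOp g).const_inner f

theorem hasSum_re_inner_frameOp_self (hΦ : IsBessel Φ) (f : E) :
    HasSum (fun n => ‖⟪Φ n, f⟫‖ ^ 2) (⟪frameOp Φ f, f⟫.re) := by
  have h := (hΦ.hasSum_inner_frameOp_left f f).mapL Complex.reCLM
  simp only [Complex.reCLM_apply] at h
  convert h using 2 with n
  rw [← inner_conj_symm f (Φ n), Complex.conj_mul', ← Complex.ofReal_pow, Complex.ofReal_re]

noncomputable def frameOpCLM (hΦ : IsBessel Φ) : E →L[ℂ] E :=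
  let S : E →ₗ[ℂ] E :=
    { toFun := frameOp Φ
      map_add' := fun f g => (hΦ.hasSum_frameOp (f + g)).unique <| by
        simpa only [inner_add_right, add_smul] using
          (hΦ.hasSum_frameOp f).add (hΦ.hasSum_frameOp g)
      map_smul' := fun a f => (hΦ.hasSum_frameOp (a • f)).unique <| by
        simpa only [inner_smul_right, mul_smul, RingHom.id_apply] using
          (hΦ.hasSum_frameOp f).const_smul a }
  -- Hellinger–Toeplitz: an everywhere defined symmetric operator is bounded
  ⟨S, LinearMap.IsSymmetric.continuous fun f g =>
    (hΦ.hasSum_inner_frameOp_left f g).unique (hΦ.hasSum_inner_frameOp_right f g)⟩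

@[simp]
theorem frameOpCLM_apply (hΦ : IsBessel Φ) (f : E) : hΦ.frameOpCLM f = frameOp Φ f := rfl

theorem isSelfAdjoint_frameOpCLM (hΦ : IsBessel Φ) : IsSelfAdjoint hΦ.frameOpCLM :=
  ContinuousLinearMap.isSelfAdjoint_iff_isSymmetric.2 fun f g =>
    (hΦ.hasSum_inner_frameOp_left f g).unique (hΦ.hasSum_inner_frameOp_right f g)

theorem map {F : Type*} [NormedAddCommGroup F] [InnerProductSpace ℂ F] [CompleteSpace F]
    (hΦ : IsBessel Φ) (T : E →L[ℂ] F) : IsBessel fun n => T (Φ n) := by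
  obtain ⟨B, hB, hΦB⟩ := hΦ
  refine ⟨B * (‖T†‖ + 1) ^ 2, by positivity, fun f => ?_⟩
  simp only [← ContinuousLinearMap.adjoint_inner_right]
  refine ⟨(hΦB _).1, (hΦB _).2.trans ?_⟩
  calc B * ‖(T†) f‖ ^ 2 ≤ B * (‖T†‖ * ‖f‖) ^ 2 := by gcongr; exact (T†).le_opNorm f
    _ ≤ B * ((‖T†‖ + 1) * ‖f‖) ^ 2 := by gcongr; linarith
    _ = B * (‖T†‖ + 1) ^ 2 * ‖f‖ ^ 2 := by ring

end IsBessel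

namespace IsFrame

variable {Φ : ℕ → E} [CompleteSpace E]

theorem isUnit_frameOpCLM (hΦ : IsFrame Φ) : IsUnit hΦ.isBessel.frameOpCLM := by
  obtain ⟨A, B, hA, -, hΦAB⟩ := id hΦ
  -- the lower frame bound says `A • 1 ≤ S` in the C⋆-algebra order
  refine CStarAlgebra.isUnit_of_le (algebraMap ℝ (E →L[ℂ] E) A) ?_
    (isStrictlyPositive_algebraMap hA)
  rw [ContinuousLinearMap.le_def, ContinuousLinearMap.isPositive_def']
  refine ⟨hΦ.isBessel.isSelfAdjoint_frameOpCLM.sub (.algebraMap _ (.all A)), fun f => ?_⟩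
  have hAf : ⟪A • f, f⟫.re = A * ‖f‖ ^ 2 := by
    simp [inner_self_eq_norm_sq_to_K, ← Complex.ofReal_pow]
  have hSf : (hΦ.isBessel.frameOpCLM - algebraMap ℝ (E →L[ℂ] E) A) f = frameOp Φ f - A • f := by
    simp [Algebra.algebraMap_eq_smul_one]
  rw [ContinuousLinearMap.reApplyInnerSelf, hSf, inner_sub_left, RCLike.re_to_complex,
    Complex.sub_re, hAf, ← (hΦ.isBessel.hasSum_re_inner_frameOp_self f).tsum_eq]
  exact sub_nonneg.2 (hΦAB f).2.1

noncomputable def canonicalDual (hΦ : IsFrame Φ) (n : ℕ) : E :=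
  Ring.inverse hΦ.isBessel.frameOpCLM (Φ n)

theorem hasSum_smul_canonicalDual (hΦ : IsFrame Φ) (f : E) :
    HasSum (fun n => ⟪Φ n, f⟫ • hΦ.canonicalDual n) f := by
  have hinv : Ring.inverse hΦ.isBessel.frameOpCLM (frameOp Φ f) = f :=
    congr($(Ring.inverse_mul_cancel _ hΦ.isUnit_frameOpCLM) f)
  simpa only [canonicalDual, map_smul, hinv] using
    (hΦ.isBessel.hasSum_frameOp f).mapL (Ring.inverse hΦ.isBessel.frameOpCLM)

theorem hasSum_inner_canonicalDual_smul (hΦ : IsFrame Φ) (f : E) :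
    HasSum (fun n => ⟪hΦ.canonicalDual n, f⟫ • Φ n) f := by
  have hinv : frameOp Φ (Ring.inverse hΦ.isBessel.frameOpCLM f) = f :=
    congr($(Ring.mul_inverse_cancel _ hΦ.isUnit_frameOpCLM) f)
  have hsym := hΦ.isBessel.isSelfAdjoint_frameOpCLM.ringInverse.isSymmetric
  have h := hΦ.isBessel.hasSum_frameOp (Ring.inverse hΦ.isBessel.frameOpCLM f)
  rw [hinv] at h
  exact h.congr_fun fun n => congrArg (· • Φ n) (hsym (Φ n) f)

theorem isDualFrame_canonicalDual (hΦ : IsFrame Φ) : IsDualFrame Φ hΦ.canonicalDual :=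
  hΦ.isBessel.isDualFrame_of_hasSum (hΦ.isBessel.map _) hΦ.hasSum_smul_canonicalDual
    hΦ.hasSum_inner_canonicalDual_smul

theorem eq_zero_of_forall_isDualFrame [Nontrivial E] (hΦ : IsFrame Φ) {a : ℕ → ℂ}
    (ha : ∀ Φd, IsDualFrame Φ Φd → HasSum (fun n => a n • Φd n) 0) (k : ℕ) : a k = 0 := by
  have hD := hΦ.isDualFrame_canonicalDual
  set c : ℕ → ℂ := fun n => (if n = k then 1 else 0) - ⟪Φ k, hΦ.canonicalDual n⟫
  have hc : Summable fun n => ‖c n‖ ^ 2 := by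
    refine .norm_sub_sq ((hasSum_ite_eq k (1 : ℝ)).summable.congr fun n => ?_) ?_
    · split_ifs <;> simp
    · obtain ⟨_, _, hΦDB⟩ := hD.1.isBessel
      simpa only [norm_inner_symm] using (hΦDB (Φ k)).1
  have hcΦ : HasSum (fun n => conj (c n) • Φ n) 0 := by
    refine (sub_self (Φ k) ▸ (hasSum_ite_eq k (Φ k)).sub
      (hΦ.hasSum_inner_canonicalDual_smul (Φ k))).congr_fun fun n => ?_
    split_ifs with hn <;> simp [c, hn, sub_smul]
  have haD : HasSum (fun n => a n * ⟪Φ k, hΦ.canonicalDual n⟫) 0 := by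
    simpa [inner_smul_right, mul_comm] using (ha _ hD).const_inner (Φ k)
  have hak := (hD.hasSum_mul_eq_zero_of_forall hΦ.isBessel ha hc hcΦ).add haD
  simp only [c, mul_sub, sub_add_cancel, mul_ite, mul_one, mul_zero, add_zero] at hak
  simpa using (hasSum_single k fun n hn => if_neg hn).unique hak

end IsFrame

end Frames

theorem stmt1 (Φ G : ℕ → H) (m : ℕ → ℂ) (hΦ : IsFrame Φ) (hm : ∀ n, m n ≠ 0)
    (hG : ∀ Φd : ℕ → H, IsDualFrame Φ Φd → ∀ f : H,
      HasSum (fun n => (m n * ⟪G n, f⟫) • Φd n) 0) :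
    ∀ n, G n = 0 := by
  intro k
  rcases subsingleton_or_nontrivial H with _ | _
  · exact Subsingleton.elim _ _
  have hk : m k * ⟪G k, G k⟫ = 0 :=
    hΦ.eq_zero_of_forall_isDualFrame (a := fun n => m n * ⟪G n, G k⟫)
      (fun Φd hd => hG Φd hd (G k)) k
  exact inner_self_eq_zero.1 ((mul_eq_zero.1 hk).resolve_left (hm k))
end

section
/- Let Φ be a frame for H and m a sequence of nonzero scalars such that mΦ is a frame whose canonical dual satisfies S_{mΦ}^{-1}(m_n φ_n) = (1/m̄_n) S_Φ^{-1}(φ_n) for all n. Let Ψ be any frame for H. Then M_{m,Φ,Ψ} is invertible with M_{m,Φ,Ψ}^{-1} = M_{1/m, Ψ̃, Φ̃} if and only if Ψ is equivalent to mΦ. -/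
open scoped ComplexConjugate ComplexInnerProductSpace

variable {H : Type*} [NormedAddCommGroup H] [InnerProductSpace ℂ H] [CompleteSpace H]

/-!
Write `U, W : H → ℓ²` for the analysis operators of `F = mΦ` and `Ψ`, and `S = U†U`, `T = W†W`
for their (invertible) frame operators. Then `M_{m,Φ,Ψ} = U†W`, and since
`(1/m_n) ⟨f, Φ̃_n⟩ = ⟨f, F̃_n⟩`, the proposed inverse is `M_{(1),Ψ̃,F̃} = T⁻¹ W†U S⁻¹`.
If `Ψ_n = V F_n` then `W = U V†`, and both products reduce to `1` by direct computation.
Conversely, `(T⁻¹ W†U S⁻¹) (U†W) = 1` says `W† P W = W† W` for the orthogonal projection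
`P = U S⁻¹ U†` onto the range of `U`, so `P W = W`, i.e. `W = U V†` with `V = W†U S⁻¹`,
which is invertible because `U†W` is.
-/

open ContinuousLinearMap
open scoped InnerProduct Ring lp

section Multiplier

variable {𝕜 E K G : Type*} [RCLike 𝕜] [NormedAddCommGroup E] [InnerProductSpace 𝕜 E]
  [CompleteSpace E] [NormedAddCommGroup K] [InnerProductSpace 𝕜 K] [CompleteSpace K]
  [NormedAddCommGroup G] [InnerProductSpace 𝕜 G]

lemma isSelfAdjoint_inverse_adjoint_comp_self (U : E →L[𝕜] K) : IsSelfAdjoint (U† ∘L U)⁻¹ʳ :=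
  (isPositive_adjoint_comp_self U).isSelfAdjoint.ringInverse

lemma inverse_adjoint_comp_self_comp_cancel {U : E →L[𝕜] K} (hU : IsUnit (U† ∘L U))
    (X : G →L[𝕜] E) : (U† ∘L U)⁻¹ʳ ∘L U† ∘L U ∘L X = X := by
  rw [← comp_assoc (U†), ← comp_assoc, ← mul_def, Ring.inverse_mul_cancel _ hU, one_def, id_comp]

/-- `U (U†U)⁻¹ U†` is a self-adjoint idempotent (the orthogonal projection onto the range of
`U`), so `1 - P` is one too and `W†(1 - P)W = ((1 - P)W)†((1 - P)W)`. -/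
lemma projection_comp_eq_of_adjoint_comp_eq {U W : E →L[𝕜] K} (hU : IsUnit (U† ∘L U))
    (h : W† ∘L U ∘L (U† ∘L U)⁻¹ʳ ∘L U† ∘L W = W† ∘L W) :
    U ∘L (U† ∘L U)⁻¹ʳ ∘L U† ∘L W = W := by
  set Q : K →L[𝕜] K := ContinuousLinearMap.id 𝕜 K - U ∘L (U† ∘L U)⁻¹ʳ ∘L U†
  have hQ : Q† ∘L Q = Q := by
    simp only [Q, map_sub, adjoint_id, adjoint_comp, adjoint_adjoint,
      isSelfAdjoint_iff'.mp (isSelfAdjoint_inverse_adjoint_comp_self U), comp_assoc, sub_comp,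
      comp_sub, id_comp, comp_id, inverse_adjoint_comp_self_comp_cancel hU]
    abel
  have hQW : (Q ∘L W)† ∘L (Q ∘L W) = 0 := by
    rw [adjoint_comp, comp_assoc, ← comp_assoc (Q†), hQ]
    simp only [Q, sub_comp, comp_sub, id_comp, comp_assoc, h, sub_self]
  have hQW' := adjoint_comp_self_eq_zero_iff.mp hQW
  rw [sub_comp, id_comp, sub_eq_zero] at hQW'
  simpa only [comp_assoc] using hQW'.symm

theorem multiplier_inverse_iff_exists_eq_comp_adjoint {U W : E →L[𝕜] K}
    (hU : IsUnit (U† ∘L U)) (hW : IsUnit (W† ∘L W)) :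
    ((W† ∘L W)⁻¹ʳ * (W† ∘L U) * (U† ∘L U)⁻¹ʳ * (U† ∘L W) = 1 ∧
      (U† ∘L W) * ((W† ∘L W)⁻¹ʳ * (W† ∘L U) * (U† ∘L U)⁻¹ʳ) = 1) ↔
    ∃ V : E →L[𝕜] E, IsUnit V ∧ W = U ∘L V† := by
  constructor
  · rintro ⟨hNM, hMN⟩
    have hM : IsUnit (U† ∘L W) := ⟨⟨_, _, hMN, hNM⟩, rfl⟩
    refine ⟨((U† ∘L U)⁻¹ʳ * (U† ∘L W))†, ?_, ?_⟩
    · rw [← star_eq_adjoint]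
      exact (hU.ringInverse.mul hM).star
    · rw [adjoint_adjoint]
      refine (projection_comp_eq_of_adjoint_comp_eq hU ?_).symm
      have h := Ring.mul_inverse_cancel_left _ ((W† ∘L U) * (U† ∘L U)⁻¹ʳ * (U† ∘L W)) hW
      simp only [← mul_assoc, hNM, mul_one] at h
      exact h.symm
  · rintro ⟨V, hV, rfl⟩
    set S := U† ∘L U
    have hM : U† ∘L (U ∘L V†) = S * V† := rfl
    have hWU : (U ∘L V†)† ∘L U = V * S := by rw [adjoint_comp, adjoint_adjoint]; rfl
    have hT : (U ∘L V†)† ∘L (U ∘L V†) = V * S * V† := by rw [adjoint_comp, adjoint_adjoint]; rfl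
    rw [hT] at hW ⊢
    rw [hM, hWU]
    have hNM : (V * S * V†)⁻¹ʳ * (V * S) * S⁻¹ʳ * (S * V†) = 1 := by
      rw [mul_assoc _ (S⁻¹ʳ), Ring.inverse_mul_cancel_left _ _ hU, mul_assoc,
        Ring.inverse_mul_cancel _ hW]
    have hMunit : IsUnit (S * V†) := hU.mul (star_eq_adjoint V ▸ hV.star)
    refine ⟨hNM, hMunit.mul_left_inj.mp ?_⟩
    rw [mul_assoc, hNM, mul_one, one_mul]

end Multiplier

lemma exists_inverse_hasSum_iff {R X ι : Type*} [Semiring R] [TopologicalSpace X]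
    [AddCommMonoid X] [Module R X] [T2Space X] {a b : X → ι → X} {M₀ N₀ : X →L[R] X}
    (ha : ∀ x, HasSum (a x) (M₀ x)) (hb : ∀ x, HasSum (b x) (N₀ x)) :
    (∃ M N : X →L[R] X, (∀ x, HasSum (a x) (M x)) ∧ (∀ x, N (M x) = x) ∧ (∀ x, M (N x) = x) ∧
      (∀ x, HasSum (b x) (N x))) ↔ N₀ * M₀ = 1 ∧ M₀ * N₀ = 1 := by
  constructor
  · rintro ⟨M, N, hM, hNM, hMN, hN⟩
    obtain rfl : M = M₀ := ContinuousLinearMap.ext fun x => (hM x).unique (ha x)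
    obtain rfl : N = N₀ := ContinuousLinearMap.ext fun x => (hN x).unique (hb x)
    exact ⟨ContinuousLinearMap.ext hNM, ContinuousLinearMap.ext hMN⟩
  · rintro ⟨hNM, hMN⟩
    exact ⟨M₀, N₀, ha, fun x => congr($hNM x), fun x => congr($hMN x), hb⟩

lemma lp.norm_sq_eq_tsum {ι : Type*} {E : ι → Type*} [∀ i, NormedAddCommGroup (E i)]
    (y : lp E 2) : ‖y‖ ^ 2 = ∑' i, ‖y i‖ ^ 2 := by
  simpa using lp.norm_rpow_eq_tsum (p := 2) (by norm_num) y

section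

omit [CompleteSpace H]

lemma IsFrame.isBessel_s13 {F : ℕ → H} (hF : IsFrame F) : IsBessel F := by
  obtain ⟨_, B, _, hB, h⟩ := hF
  exact ⟨B, hB, fun f => ⟨(h f).1, (h f).2.2⟩⟩

namespace IsBessel

variable {F : ℕ → H}

lemma memℓp_inner (hF : IsBessel F) (f : H) : Memℓp (fun n => ⟪F n, f⟫) 2 := by
  obtain ⟨B, -, h⟩ := hF
  exact (memℓp_gen_iff (by norm_num)).2 (by simpa using (h f).1)

noncomputable def analysis (hF : IsBessel F) : H →L[ℂ] ℓ²(ℕ, ℂ) :=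
  LinearMap.mkContinuousOfExistsBound
    { toFun := fun f => ⟨fun n => ⟪F n, f⟫, hF.memℓp_inner f⟩
      map_add' := fun f g => lp.ext <| funext fun n => inner_add_right _ _ _
      map_smul' := fun c f => lp.ext <| funext fun n => inner_smul_right _ _ _ } <| by
    obtain ⟨B, hB, h⟩ := hF
    refine ⟨√B, fun f => ?_⟩
    rw [← Real.sqrt_sq (norm_nonneg _), lp.norm_sq_eq_tsum, ← Real.sqrt_sq (norm_nonneg f),
      ← Real.sqrt_mul hB.le]
    exact Real.sqrt_le_sqrt (h f).2

@[simp]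
lemma analysis_apply (hF : IsBessel F) (f : H) (n : ℕ) : hF.analysis f n = ⟪F n, f⟫ := rfl

lemma norm_analysis_sq (hF : IsBessel F) (f : H) :
    ‖hF.analysis f‖ ^ 2 = ∑' n, ‖⟪F n, f⟫‖ ^ 2 :=
  lp.norm_sq_eq_tsum _

end IsBessel

end

namespace IsBessel

variable {F : ℕ → H}

lemma adjoint_analysis_single (hF : IsBessel F) (n : ℕ) (c : ℂ) :
    (hF.analysis†) (lp.single 2 n c) = c • F n := by
  refine ext_inner_right ℂ fun g => ?_
  rw [adjoint_inner_left, lp.inner_single_left, analysis_apply, inner_smul_left, RCLike.inner_apply,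
    mul_comm]

lemma hasSum_adjoint_analysis (hF : IsBessel F) (y : ℓ²(ℕ, ℂ)) :
    HasSum (fun n => y n • F n) ((hF.analysis†) y) := by
  simpa only [adjoint_analysis_single] using
    (lp.hasSum_single ENNReal.ofNat_ne_top y).mapL (hF.analysis†)

lemma frameOp_eq (hF : IsBessel F) (f : H) : frameOp F f = (hF.analysis† ∘L hF.analysis) f :=
  (hF.hasSum_adjoint_analysis (hF.analysis f)).tsum_eq

lemma analysis_eq_comp_adjoint_iff {G : ℕ → H} (hF : IsBessel F) (hG : IsBessel G)
    (V : H →L[ℂ] H) : hG.analysis = hF.analysis ∘L V† ↔ ∀ n, V (F n) = G n := by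
  simp only [ContinuousLinearMap.ext_iff, lp.ext_iff, funext_iff, comp_apply, analysis_apply,
    adjoint_inner_right]
  exact ⟨fun h n => ext_inner_right ℂ fun f => (h f n).symm, fun h f n => by rw [h]⟩

end IsBessel

namespace IsFrame

variable {F : ℕ → H}

lemma isUnit_frameOperator (hF : IsFrame F) :
    IsUnit (hF.isBessel_s13.analysis† ∘L hF.isBessel_s13.analysis) := by
  obtain ⟨A, _, hA, _, h⟩ := id hF
  refine isUnit_of_forall_le_norm_inner_map _ (c := ⟨A, hA.le⟩) hA fun f => ?_
  rw [comp_apply, adjoint_inner_left, inner_self_eq_norm_sq_to_K, norm_pow, RCLike.norm_ofReal,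
    abs_norm, IsBessel.norm_analysis_sq, mul_comm]
  exact (h f).2.1

lemma eq_inverse_of_frameOp_eq (hF : IsFrame F) {g x : H} (h : frameOp F g = x) :
    g = (hF.isBessel_s13.analysis† ∘L hF.isBessel_s13.analysis)⁻¹ʳ x := by
  rw [← h, hF.isBessel_s13.frameOp_eq, ← comp_apply, ← mul_def,
    Ring.inverse_mul_cancel _ hF.isUnit_frameOperator]
  rfl

theorem multiplier_invertible_iff_equivalent {G Ft Gt : ℕ → H} (hF : IsFrame F)
    (hG : IsFrame G) (hFt : ∀ n, frameOp F (Ft n) = F n) (hGt : ∀ n, frameOp G (Gt n) = G n) :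
    (∃ M N : H →L[ℂ] H, (∀ f, HasSum (fun n => ⟪G n, f⟫ • F n) (M f)) ∧
      (∀ f, N (M f) = f) ∧ (∀ f, M (N f) = f) ∧
      (∀ f, HasSum (fun n => ⟪Ft n, f⟫ • Gt n) (N f))) ↔
    ∃ V : H →L[ℂ] H, Function.Bijective V ∧ ∀ n, V (F n) = G n := by
  set U := hF.isBessel_s13.analysis
  set W := hG.isBessel_s13.analysis
  have hM (f : H) : HasSum (fun n => ⟪G n, f⟫ • F n) ((U† ∘L W) f) :=
    hF.isBessel_s13.hasSum_adjoint_analysis (W f)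
  have hN (f : H) : HasSum (fun n => ⟪Ft n, f⟫ • Gt n)
      (((W† ∘L W)⁻¹ʳ * (W† ∘L U) * (U† ∘L U)⁻¹ʳ) f) := by
    convert (hG.isBessel_s13.hasSum_adjoint_analysis (U ((U† ∘L U)⁻¹ʳ f))).mapL (W† ∘L W)⁻¹ʳ
      using 1
    · funext n
      rw [map_smul, ← hG.eq_inverse_of_frameOp_eq (hGt n), hF.eq_inverse_of_frameOp_eq (hFt n)]
      exact congr($((isSelfAdjoint_inverse_adjoint_comp_self U).isSymmetric _ _) • Gt n)
    · rfl
  refine (exists_inverse_hasSum_iff hM hN).trans <|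
    (multiplier_inverse_iff_exists_eq_comp_adjoint hF.isUnit_frameOperator
      hG.isUnit_frameOperator).trans <|
    exists_congr fun V => and_congr isUnit_iff_bijective <|
      hF.isBessel_s13.analysis_eq_comp_adjoint_iff hG.isBessel_s13 V

end IsFrame

theorem stmt13_general (Φ Ψ : ℕ → H) (m : ℕ → ℂ) (hΨ : IsFrame Ψ)
    (hmΦ : IsFrame (fun n => m n • Φ n))
    (Φt Ψt mΦt : ℕ → H)
    (hΨt : ∀ n, frameOp Ψ (Ψt n) = Ψ n)
    (hmΦt : ∀ n, frameOp (fun k => m k • Φ k) (mΦt n) = m n • Φ n)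
    (hcan : ∀ n, mΦt n = ((starRingEnd ℂ) (m n))⁻¹ • Φt n) :
    (∃ M N : H →L[ℂ] H,
      (∀ f : H, HasSum (fun n => (m n * ⟪Ψ n, f⟫) • Φ n) (M f)) ∧
      (∀ f : H, N (M f) = f) ∧ (∀ f : H, M (N f) = f) ∧
      (∀ f : H, HasSum (fun n => ((m n)⁻¹ * ⟪Φt n, f⟫) • Ψt n) (N f)))
    ↔ (∃ V : H →L[ℂ] H, Function.Bijective V ∧ ∀ n, V (m n • Φ n) = Ψ n) := by
  have hM (f : H) : (fun n => (m n * ⟪Ψ n, f⟫) • Φ n) = fun n => ⟪Ψ n, f⟫ • (m n • Φ n) := by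
    simp only [smul_smul, mul_comm]
  have hN (f : H) : (fun n => ((m n)⁻¹ * ⟪Φt n, f⟫) • Ψt n) = fun n => ⟪mΦt n, f⟫ • Ψt n := by
    simp only [hcan, inner_smul_left, map_inv₀, Complex.conj_conj]
  simp only [hM, hN]
  exact hmΦ.multiplier_invertible_iff_equivalent hΨ hmΦt hΨt

theorem stmt13 (Φ Ψ : ℕ → H) (m : ℕ → ℂ) (hΦ : IsFrame Φ) (hΨ : IsFrame Ψ)
    (hm : ∀ n, m n ≠ 0) (hmΦ : IsFrame (fun n => m n • Φ n))
    (Φt Ψt mΦt : ℕ → H)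
    (hΦt : ∀ n, frameOp Φ (Φt n) = Φ n) (hΨt : ∀ n, frameOp Ψ (Ψt n) = Ψ n)
    (hmΦt : ∀ n, frameOp (fun k => m k • Φ k) (mΦt n) = m n • Φ n)
    (hcan : ∀ n, mΦt n = ((starRingEnd ℂ) (m n))⁻¹ • Φt n) :
    (∃ M N : H →L[ℂ] H,
      (∀ f : H, HasSum (fun n => (m n * ⟪Ψ n, f⟫) • Φ n) (M f)) ∧
      (∀ f : H, N (M f) = f) ∧ (∀ f : H, M (N f) = f) ∧
      (∀ f : H, HasSum (fun n => ((m n)⁻¹ * ⟪Φt n, f⟫) • Ψt n) (N f)))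
    ↔ (∃ V : H →L[ℂ] H, Function.Bijective V ∧ ∀ n, V (m n • Φ n) = Ψ n) :=
  stmt13_general Φ Ψ m hΨ hmΦ Φt Ψt mΦt hΨt hmΦt hcan
end
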